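/- Let N, M ≥ 1, let S ⊆ ℂ^N, let V ⊆ ℂ^N be open with S ⊆ V, and let F : V → ℂ^M be of class C² (over ℝ) and ∂̄-flat to order 2 on S, meaning: for every x ∈ S the conjugate-linear part N(x) of the real Fréchet derivative of F at x vanishes, and the real Fréchet derivative at x of the map x' ↦ N(x') vanishes. Let U ⊆ ℂ^M be open with F(S) ⊆ U, and let α : U → (ℂ^M →L[ℝ] ℂ) be a C¹ one-form that is asymptotically holomorphic on F(S), meaning: for every y ∈ F(S), (a) the conjugate-linear part α(y)^{0,1} vanishes, (b) the real Fréchet derivative at y of the map y' ↦ α(y')^{0,1} vanishes, and (c) for every w ∈ ℂ^M the real Fréchet derivative at y of the scalar function y' ↦ α(y')^{1,0}(w) is ℂ-linear. Then the pullback one-form (F*α)(x) := α(F(x)) ∘ (fderiv ℝ F x), defined on V, satisfies the same three conditions (a), (b), (c) at every point x ∈ S; that is, F*α is asymptotically holomorphic on S. -/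

import Mathlib

open Complex

/-- The conjugate-linear (i.e. `(0,1)`) part of a real-linear map `T` between complex
normed spaces: `T^{0,1}(v) = ½(T(v) + i·T(i·v))`. -/
noncomputable def conjLinearPart {E F : Type*}
    [NormedAddCommGroup E] [NormedSpace ℂ E] [NormedAddCommGroup F] [NormedSpace ℂ F]
    (T : E →L[ℝ] F) : E →L[ℝ] F :=
  (1 / 2 : ℝ) • (T + (Complex.I • ContinuousLinearMap.id ℝ F).comp
      (T.comp (Complex.I • ContinuousLinearMap.id ℝ E)))

/-! By the chain and product rules, the derivative at `x` of the pullback `x ↦ α(F x) ∘ dF_x` is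
`B u v = α(F x)(d²F(u, v)) + dα(dF u)(dF v)`. Conditions (a)–(c) at a point say exactly that the
form and every `B u` are ℂ-linear and that `B` is ℂ-linear in `u`. Flatness makes `dF` and every
`d²F(u, ·)` ℂ-linear, and the symmetry of `d²F` moves linearity from the second slot of `d²F` to
the first. -/

section AsymptoticallyHolomorphic

variable {E E' F G : Type*}
  [NormedAddCommGroup E] [NormedSpace ℂ E] [NormedAddCommGroup E'] [NormedSpace ℂ E']
  [NormedAddCommGroup F] [NormedSpace ℂ F] [NormedAddCommGroup G] [NormedSpace ℝ G]

theorem conjLinearPart_apply (T : E →L[ℝ] F) (v : E) :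
    conjLinearPart T v = (1 / 2 : ℝ) • (T v + I • T (I • v)) := by
  simp [conjLinearPart]

theorem conjLinearPart_eq_zero_iff (T : E →L[ℝ] F) :
    conjLinearPart T = 0 ↔ ∀ v, T (I • v) = I • T v := by
  refine ⟨fun h v => ?_, fun h => ?_⟩
  · have hsum : T v + I • T (I • v) = 0 := by
      have hv := congrArg (fun S : E →L[ℝ] F => S v) h
      rw [conjLinearPart_apply] at hv
      exact (smul_eq_zero.mp hv).resolve_left (by norm_num)
    have hrot := congrArg (I • ·) hsum
    simp only [smul_add, smul_smul, I_mul_I, neg_one_smul, smul_zero] at hrot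
    exact (add_neg_eq_zero.mp hrot).symm
  · ext v
    simp [conjLinearPart_apply, h v, smul_smul]

variable (E F) in
noncomputable def conjLinearPartL : (E →L[ℝ] F) →L[ℝ] (E →L[ℝ] F) :=
  (1 / 2 : ℝ) • (ContinuousLinearMap.id ℝ _ +
    (ContinuousLinearMap.compL ℝ E F F (I • ContinuousLinearMap.id ℝ F)).comp
      ((ContinuousLinearMap.compL ℝ E E F).flip (I • ContinuousLinearMap.id ℝ E)))

theorem conjLinearPartL_apply (T : E →L[ℝ] F) : conjLinearPartL E F T = conjLinearPart T :=
  rfl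

theorem HasFDerivAt.conjLinearPart {f : G → E →L[ℝ] F} {f' : G →L[ℝ] E →L[ℝ] F} {x : G}
    (h : HasFDerivAt f f' x) :
    HasFDerivAt (fun x' => _root_.conjLinearPart (f x')) ((conjLinearPartL E F).comp f') x :=
  (conjLinearPartL E F).hasFDerivAt.comp x h

theorem HasFDerivAt.fderiv_conjLinearPart_eq_zero_iff {f : G → E →L[ℝ] F}
    {f' : G →L[ℝ] E →L[ℝ] F} {x : G} (h : HasFDerivAt f f' x) :
    fderiv ℝ (fun x' => _root_.conjLinearPart (f x')) x = 0 ↔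
      ∀ u v, f' u (I • v) = I • f' u v := by
  rw [h.conjLinearPart.fderiv]
  simp only [ContinuousLinearMap.ext_iff, ContinuousLinearMap.comp_apply, conjLinearPartL_apply,
    zero_apply, ← conjLinearPart_eq_zero_iff]

theorem HasFDerivAt.fderiv_sub_conjLinearPart_apply {f : G → E →L[ℝ] F}
    {f' : G →L[ℝ] E →L[ℝ] F} {x : G} (h : HasFDerivAt f f' x)
    (h0 : fderiv ℝ (fun x' => _root_.conjLinearPart (f x')) x = 0) (w : E) (u : G) :
    fderiv ℝ (fun x' => (f x' - _root_.conjLinearPart (f x')) w) x u = f' u w := by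
  have hsub : HasFDerivAt (fun x' => (f x' - _root_.conjLinearPart (f x')) w)
      ((ContinuousLinearMap.apply ℝ F w).comp (f' - (conjLinearPartL E F).comp f')) x :=
    (ContinuousLinearMap.apply ℝ F w).hasFDerivAt.comp x (h.sub h.conjLinearPart)
  rw [h.conjLinearPart.fderiv] at h0
  rw [hsub.fderiv, h0]
  simp

def IsAsymptoticallyHolomorphicAt (β : E → E →L[ℝ] F) (x : E) : Prop :=
  conjLinearPart (β x) = 0 ∧
  fderiv ℝ (fun x' => conjLinearPart (β x')) x = 0 ∧
  ∀ w u : E, fderiv ℝ (fun x' => (β x' - conjLinearPart (β x')) w) x (I • u) =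
    I • fderiv ℝ (fun x' => (β x' - conjLinearPart (β x')) w) x u

theorem HasFDerivAt.isAsymptoticallyHolomorphicAt_iff {β : E → E →L[ℝ] F}
    {B : E →L[ℝ] E →L[ℝ] F} {x : E} (h : HasFDerivAt β B x) :
    IsAsymptoticallyHolomorphicAt β x ↔
      (∀ v, β x (I • v) = I • β x v) ∧ (∀ u v, B u (I • v) = I • B u v) ∧
        ∀ u w, B (I • u) w = I • B u w := by
  rw [IsAsymptoticallyHolomorphicAt, conjLinearPart_eq_zero_iff,
    h.fderiv_conjLinearPart_eq_zero_iff]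
  refine and_congr_right fun _ => and_congr_right fun hb => ?_
  simp only [h.fderiv_sub_conjLinearPart_apply (h.fderiv_conjLinearPart_eq_zero_iff.mpr hb)]
  exact forall_comm

theorem IsAsymptoticallyHolomorphicAt.pullback {Φ : E → E'} {α : E' → E' →L[ℝ] F} {x : E}
    (hα : IsAsymptoticallyHolomorphicAt α (Φ x)) (hαd : DifferentiableAt ℝ α (Φ x))
    (hΦ : ContDiffAt ℝ 2 Φ x) (hflat₁ : conjLinearPart (fderiv ℝ Φ x) = 0)
    (hflat₂ : fderiv ℝ (fun x' => conjLinearPart (fderiv ℝ Φ x')) x = 0) :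
    IsAsymptoticallyHolomorphicAt (fun x' => (α (Φ x')).comp (fderiv ℝ Φ x')) x := by
  set D := fderiv ℝ Φ x
  set D' := fderiv ℝ (fderiv ℝ Φ) x
  set A' := fderiv ℝ α (Φ x)
  have hΦd : HasFDerivAt Φ D x := (hΦ.differentiableAt (by norm_num)).hasFDerivAt
  have hD'd : HasFDerivAt (fderiv ℝ Φ) D' x :=
    ((hΦ.fderiv_right (m := 1) (by norm_num)).differentiableAt one_ne_zero).hasFDerivAt
  obtain ⟨hα₀, hA'₁, hA'₂⟩ := hαd.hasFDerivAt.isAsymptoticallyHolomorphicAt_iff.mp hα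
  have hD := (conjLinearPart_eq_zero_iff D).mp hflat₁
  have hD' := hD'd.fderiv_conjLinearPart_eq_zero_iff.mp hflat₂
  have hsymm : ∀ u v, D' u v = D' v u := hΦ.isSymmSndFDerivAt (by simp)
  set B := (ContinuousLinearMap.compL ℝ E E' F (α (Φ x))).comp D' +
    ((ContinuousLinearMap.compL ℝ E E' F).flip D).comp (A'.comp D)
  have hB : ∀ u v, B u v = α (Φ x) (D' u v) + A' (D u) (D v) := fun u v => by
    simp [B, ContinuousLinearMap.compL_apply]
  have hβd : HasFDerivAt (fun x' => (α (Φ x')).comp (fderiv ℝ Φ x')) B x :=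
    (hαd.hasFDerivAt.comp x hΦd).clm_comp hD'd
  refine hβd.isAsymptoticallyHolomorphicAt_iff.mpr ⟨fun v => ?_, fun u v => ?_, fun u w => ?_⟩
  · simp [D, hD, hα₀]
  · rw [hB, hB, hD', hD, hα₀, hA'₁, smul_add]
  · rw [hB, hB, hsymm, hD, hD', hα₀, hA'₂, hsymm w, smul_add]

end AsymptoticallyHolomorphic

theorem pullback_asymptotically_holomorphic_general
    (N M : ℕ)
    (S : Set (Fin N → ℂ)) (V : Set (Fin N → ℂ)) (hV : IsOpen V) (hSV : S ⊆ V)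
    (F : (Fin N → ℂ) → (Fin M → ℂ)) (hF : ContDiffOn ℝ 2 F V)
    -- `F` is ∂̄-flat to order 2 on `S`:
    (hflat₁ : ∀ x ∈ S, conjLinearPart (fderiv ℝ F x) = 0)
    (hflat₂ : ∀ x ∈ S, fderiv ℝ (fun x' => conjLinearPart (fderiv ℝ F x')) x = 0)
    (U : Set (Fin M → ℂ)) (hU : IsOpen U) (hFS : F '' S ⊆ U)
    (α : (Fin M → ℂ) → ((Fin M → ℂ) →L[ℝ] ℂ)) (hα : ContDiffOn ℝ 1 α U)
    -- `α` is asymptotically holomorphic on `F(S)`: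
    (ha : ∀ y ∈ F '' S, conjLinearPart (α y) = 0)
    (hb : ∀ y ∈ F '' S, fderiv ℝ (fun y' => conjLinearPart (α y')) y = 0)
    (hc : ∀ y ∈ F '' S, ∀ w : Fin M → ℂ, ∀ u : Fin M → ℂ,
      fderiv ℝ (fun y' => (α y' - conjLinearPart (α y')) w) y (Complex.I • u) =
        Complex.I * fderiv ℝ (fun y' => (α y' - conjLinearPart (α y')) w) y u)
    -- the pullback one-form `F*α`:
    (β : (Fin N → ℂ) → ((Fin N → ℂ) →L[ℝ] ℂ))
    (hβ : β = fun x => (α (F x)).comp (fderiv ℝ F x)) :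
    -- then `F*α` is asymptotically holomorphic on `S`:
    (∀ x ∈ S, conjLinearPart (β x) = 0) ∧
    (∀ x ∈ S, fderiv ℝ (fun x' => conjLinearPart (β x')) x = 0) ∧
    (∀ x ∈ S, ∀ w : Fin N → ℂ, ∀ u : Fin N → ℂ,
      fderiv ℝ (fun x' => (β x' - conjLinearPart (β x')) w) x (Complex.I • u) =
        Complex.I * fderiv ℝ (fun x' => (β x' - conjLinearPart (β x')) w) x u) := by
  have hβS : ∀ x ∈ S, IsAsymptoticallyHolomorphicAt β x := by
    intro x hx
    subst hβ
    have hy : F x ∈ F '' S := Set.mem_image_of_mem F hx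
    exact IsAsymptoticallyHolomorphicAt.pullback ⟨ha _ hy, hb _ hy, hc _ hy⟩
      ((hα.contDiffAt (hU.mem_nhds (hFS hy))).differentiableAt one_ne_zero)
      (hF.contDiffAt (hV.mem_nhds (hSV hx))) (hflat₁ x hx) (hflat₂ x hx)
  exact ⟨fun x hx => (hβS x hx).1, fun x hx => (hβS x hx).2.1, fun x hx => (hβS x hx).2.2⟩

/-- Lemma 3.2 (local model in `ℂ^N`): if `F : ℂ^N → ℂ^M` is `C²` and ∂̄-flat to order 2
on a set `S`, and `α` is a `C¹` one-form on a neighbourhood of `F(S)` that is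
asymptotically holomorphic on `F(S)`, then the pullback one-form `F*α` is asymptotically
holomorphic on `S`. -/
theorem pullback_asymptotically_holomorphic
    (N M : ℕ) (hN : 1 ≤ N) (hM : 1 ≤ M)
    (S : Set (Fin N → ℂ)) (V : Set (Fin N → ℂ)) (hV : IsOpen V) (hSV : S ⊆ V)
    (F : (Fin N → ℂ) → (Fin M → ℂ)) (hF : ContDiffOn ℝ 2 F V)
    -- `F` is ∂̄-flat to order 2 on `S`:
    (hflat₁ : ∀ x ∈ S, conjLinearPart (fderiv ℝ F x) = 0)
    (hflat₂ : ∀ x ∈ S, fderiv ℝ (fun x' => conjLinearPart (fderiv ℝ F x')) x = 0)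
    (U : Set (Fin M → ℂ)) (hU : IsOpen U) (hFS : F '' S ⊆ U)
    (α : (Fin M → ℂ) → ((Fin M → ℂ) →L[ℝ] ℂ)) (hα : ContDiffOn ℝ 1 α U)
    -- `α` is asymptotically holomorphic on `F(S)`:
    (ha : ∀ y ∈ F '' S, conjLinearPart (α y) = 0)
    (hb : ∀ y ∈ F '' S, fderiv ℝ (fun y' => conjLinearPart (α y')) y = 0)
    (hc : ∀ y ∈ F '' S, ∀ w : Fin M → ℂ, ∀ u : Fin M → ℂ,
      fderiv ℝ (fun y' => (α y' - conjLinearPart (α y')) w) y (Complex.I • u) =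
        Complex.I * fderiv ℝ (fun y' => (α y' - conjLinearPart (α y')) w) y u)
    -- the pullback one-form `F*α`:
    (β : (Fin N → ℂ) → ((Fin N → ℂ) →L[ℝ] ℂ))
    (hβ : β = fun x => (α (F x)).comp (fderiv ℝ F x)) :
    -- then `F*α` is asymptotically holomorphic on `S`:
    (∀ x ∈ S, conjLinearPart (β x) = 0) ∧
    (∀ x ∈ S, fderiv ℝ (fun x' => conjLinearPart (β x')) x = 0) ∧
    (∀ x ∈ S, ∀ w : Fin N → ℂ, ∀ u : Fin N → ℂ,
      fderiv ℝ (fun x' => (β x' - conjLinearPart (β x')) w) x (Complex.I • u) =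
        Complex.I * fderiv ℝ (fun x' => (β x' - conjLinearPart (β x')) w) x u) :=
  pullback_asymptotically_holomorphic_general N M S V hV hSV F hF hflat₁ hflat₂ U hU hFS α hα ha hb
    hc β hβ
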